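/- arXiv:1809.01750 — 3 statements merged into one kernel-verified Lean document; each statement's English description precedes it below -/
import Mathlib

section
/- Let f : ℤ² → ℝ³ be nowhere-spherical and suppose that for all m, m', n ∈ ℤ the four points f(m,n), f(m',n), f(m',n+1), f(m,n+1) are concyclic (the property enjoyed by the '+'-coordinate ribbons of a discrete channel surface with circular direction '+'). Then f satisfies the 5-point-sphere condition at every vertex (i.e., f is isothermic) if and only if for every (m,n) the four diagonal neighbours f(m−1,n−1), f(m+1,n−1), f(m+1,n+1), f(m−1,n+1) are concyclic. -/
open RealInnerProductSpace

noncomputable section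

abbrev E3 : Type := EuclideanSpace ℝ (Fin 3)

/-- A set of points is concyclic if the points lie on a common circle or a common line. -/
def ConcyclicOrCollinear (s : Set E3) : Prop :=
  EuclideanGeometry.Concyclic s ∨ Collinear ℝ s

/-- The nine points of the vertex-star of `(m,n)` (including diagonal neighbours). -/
def NinePts (f : ℤ × ℤ → E3) (m n : ℤ) : Set E3 :=
  {x | ∃ a b : ℤ, |a| ≤ 1 ∧ |b| ≤ 1 ∧ x = f (m + a, n + b)}

/-- `f` is nowhere-spherical: for every vertex the nine points of its vertex-star are
pairwise distinct, no three of them are collinear, and they do not all lie on a common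
sphere or plane. -/
def NowhereSpherical (f : ℤ × ℤ → E3) : Prop :=
  ∀ m n : ℤ,
    (∀ a b a' b' : ℤ, |a| ≤ 1 → |b| ≤ 1 → |a'| ≤ 1 → |b'| ≤ 1 →
      f (m + a, n + b) = f (m + a', n + b') → a = a' ∧ b = b') ∧
    (∀ x y z : E3, x ∈ NinePts f m n → y ∈ NinePts f m n → z ∈ NinePts f m n →
      x ≠ y → y ≠ z → x ≠ z → ¬ Collinear ℝ ({x, y, z} : Set E3)) ∧
    ¬ (EuclideanGeometry.Cospherical (NinePts f m n) ∨ Coplanar ℝ (NinePts f m n))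

/-- A subset of `ℝ³` which is a sphere (of positive radius) or a plane. -/
def IsSphereOrPlane (s : Set E3) : Prop :=
  (∃ (c : E3) (r : ℝ), 0 < r ∧ s = Metric.sphere c r) ∨
  (∃ (u : E3) (d : ℝ), u ≠ 0 ∧ s = {x : E3 | ⟪u, x⟫ = d})

/-- The 5-point-sphere condition (discrete isothermic condition) at `(m,n)`: a sphere or
plane contains the vertex and its four diagonal neighbours, but not all four edge-neighbours. -/
def FivePointSphereCond (f : ℤ × ℤ → E3) (m n : ℤ) : Prop :=
  ∃ s : Set E3, IsSphereOrPlane s ∧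
    f (m, n) ∈ s ∧ f (m - 1, n - 1) ∈ s ∧ f (m + 1, n - 1) ∈ s ∧
    f (m + 1, n + 1) ∈ s ∧ f (m - 1, n + 1) ∈ s ∧
    ¬ (f (m - 1, n) ∈ s ∧ f (m + 1, n) ∈ s ∧ f (m, n - 1) ∈ s ∧ f (m, n + 1) ∈ s)

namespace Stmt10

abbrev V5 : Type := ℝ × E3 × ℝ

def lift (x : E3) : V5 := (⟪x, x⟫, x, 1)

def lfun (a : ℝ) (b : E3) (c : ℝ) : V5 →ₗ[ℝ] ℝ where
  toFun v := a * v.1 + ⟪b, v.2.1⟫ + c * v.2.2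
  map_add' v w := by simp [inner_add_right]; ring
  map_smul' r v := by simp [inner_smul_right]; ring

@[simp] lemma lfun_apply (a : ℝ) (b : E3) (c : ℝ) (v : V5) :
    lfun a b c v = a * v.1 + ⟪b, v.2.1⟫ + c * v.2.2 := rfl

lemma lfun_lift (a : ℝ) (b : E3) (c : ℝ) (x : E3) :
    lfun a b c (lift x) = a * ⟪x, x⟫ + ⟪b, x⟫ + c := by
  simp [lift]

lemma finrank_V5 : Module.finrank ℝ V5 = 5 := by
  simp [Module.finrank_prod, finrank_euclideanSpace]

lemma exists_lfun_ann (p : Submodule ℝ V5) (x : V5) (hx : x ∉ p) :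
    ∃ a b c, (∀ v ∈ p, lfun a b c v = 0) ∧ lfun a b c x ≠ 0 := by
  have hq : p.mkQ x ≠ 0 := by
    simpa [Submodule.Quotient.mk_eq_zero] using hx
  have hg : ∃ g : Module.Dual ℝ (V5 ⧸ p), g (p.mkQ x) ≠ 0 := by
    by_contra h
    push_neg at h
    exact hq ((Module.forall_dual_apply_eq_zero_iff ℝ _).1 h)
  obtain ⟨g, hg⟩ := hg
  set L : V5 →ₗ[ℝ] ℝ := g.comp p.mkQ with hLdef
  set inc : E3 →ₗ[ℝ] V5 := LinearMap.prod 0 (LinearMap.prod LinearMap.id 0) with hinc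
  have hincapp : ∀ y : E3, inc y = ((0:ℝ), y, (0:ℝ)) := fun y => rfl
  set Lb : E3 →ₗ[ℝ] ℝ := L.comp inc with hLb
  set b : E3 := (InnerProductSpace.toDual ℝ E3).symm (LinearMap.toContinuousLinearMap Lb) with hb
  have hbspec : ∀ y : E3, ⟪b, y⟫ = L ((0:ℝ), y, (0:ℝ)) := by
    intro y
    have h1 := InnerProductSpace.toDual_symm_apply
      (𝕜 := ℝ) (E := E3) (x := y) (y := LinearMap.toContinuousLinearMap Lb)
    calc ⟪b, y⟫ = Lb y := by simpa [hb] using h1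
      _ = L ((0:ℝ), y, (0:ℝ)) := rfl
  set a : ℝ := L (1, 0, 0) with ha
  set c : ℝ := L (0, 0, 1) with hc
  have key : ∀ v : V5, lfun a b c v = L v := by
    intro v
    have hv : v = v.1 • ((1:ℝ), (0:E3), (0:ℝ)) + ((0:ℝ), v.2.1, (0:ℝ))
        + v.2.2 • ((0:ℝ), (0:E3), (1:ℝ)) := by
      ext <;> simp
    rw [lfun_apply, hbspec]
    conv_rhs => rw [hv]
    simp only [map_add, map_smul, smul_eq_mul]
    ring
  refine ⟨a, b, c, fun v hv => ?_, ?_⟩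
  · rw [key]
    simp [hLdef, (Submodule.Quotient.mk_eq_zero p).2 hv]
  · rw [key]
    exact hg

lemma indep_triple {x y z : E3} (h : ¬ Collinear ℝ ({x, y, z} : Set E3)) :
    LinearIndependent ℝ ![lift x, lift y, lift z] := by
  have hai : AffineIndependent ℝ ![x, y, z] := affineIndependent_iff_not_collinear_set.2 h
  rw [Fintype.linearIndependent_iff]
  intro g hg
  simp only [Fin.sum_univ_three, Matrix.cons_val_zero, Matrix.cons_val_one, Matrix.head_cons,
    Matrix.cons_val_two, Matrix.tail_cons, lift, Prod.smul_mk, Prod.mk_add_mk,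
    Prod.mk_eq_zero, smul_eq_mul] at hg
  obtain ⟨h1, h2, h3⟩ := hg
  have := affineIndependent_iff.1 hai Finset.univ g
    (by simpa [Fin.sum_univ_three] using by linarith [h3] : Finset.univ.sum g = 0)
    (by simpa [Fin.sum_univ_three] using h2)
  intro i
  exact this i (Finset.mem_univ i)

lemma mem_span_triple {u x y z : V5} :
    u ∈ Submodule.span ℝ ({x, y, z} : Set V5) ↔ ∃ α β γ : ℝ, u = α • x + β • y + γ • z := by
  constructor
  · intro hu
    rw [show ({x, y, z} : Set V5) = insert x {y, z} from rfl,
      Submodule.mem_span_insert] at hu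
    obtain ⟨α, w, hw, rfl⟩ := hu
    rw [Submodule.mem_span_pair] at hw
    obtain ⟨β, γ, rfl⟩ := hw
    exact ⟨α, β, γ, by abel⟩
  · rintro ⟨α, β, γ, rfl⟩
    refine Submodule.add_mem _ (Submodule.add_mem _ ?_ ?_) ?_ <;>
      exact Submodule.smul_mem _ _ (Submodule.subset_span (by simp))

lemma not_eq_combo {u v w : V5} (h : LinearIndependent ℝ ![u, v, w]) (b c : ℝ) :
    u ≠ b • v + c • w := by
  intro he
  have := Fintype.linearIndependent_iff.1 h ![1, -b, -c] ?_
  · simpa using this 0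
  · simp only [Fin.sum_univ_three, Matrix.cons_val_zero, Matrix.cons_val_one, Matrix.head_cons,
      Matrix.cons_val_two, Matrix.tail_cons]
    rw [he]
    module

lemma cospherical_lfun {s : Set E3} (h : EuclideanGeometry.Cospherical s) :
    ∃ b c, ∀ x ∈ s, lfun 1 b c (lift x) = 0 := by
  obtain ⟨u, r, hu⟩ := h
  refine ⟨(-2 : ℝ) • u, ⟪u, u⟫ - r ^ 2, fun x hx => ?_⟩
  have hd := hu x hx
  rw [dist_eq_norm] at hd
  have h2 : ‖x - u‖ ^ 2 = r ^ 2 := by rw [hd]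
  rw [norm_sub_sq_real] at h2
  rw [lfun_lift, real_inner_smul_left]
  rw [real_inner_self_eq_norm_sq x, real_inner_self_eq_norm_sq u] at *
  have : ⟪u, x⟫ = ⟪x, u⟫ := real_inner_comm x u
  linarith

lemma coplanar_of_plane {s : Set E3} {b : E3} {c : ℝ} (hb : b ≠ 0)
    (h : ∀ x ∈ s, ⟪b, x⟫ = c) : Coplanar ℝ s := by
  set ib : E3 →ₗ[ℝ] ℝ :=
    { toFun := fun x => ⟪b, x⟫
      map_add' := fun x y => by simp [inner_add_right]
      map_smul' := fun r x => by simp [inner_smul_right] } with hib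
  have hsurj : Function.Surjective ib := by
    intro t
    refine ⟨(t / ⟪b, b⟫) • b, ?_⟩
    have hbb : ⟪b, b⟫ ≠ 0 := inner_self_ne_zero.2 hb
    show ⟪b, (t / ⟪b, b⟫) • b⟫ = t
    rw [real_inner_smul_right]
    exact div_mul_cancel₀ t hbb
  have hrn := LinearMap.finrank_range_add_finrank_ker ib
  rw [LinearMap.range_eq_top.2 hsurj, finrank_top] at hrn
  have hker : Module.finrank ℝ (LinearMap.ker ib) = 2 := by
    have h3 : Module.finrank ℝ E3 = 3 := by simp [finrank_euclideanSpace]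
    have h1 : Module.finrank ℝ ℝ = 1 := Module.finrank_self ℝ
    omega
  have hle : vectorSpan ℝ s ≤ LinearMap.ker ib := by
    rw [vectorSpan_def, Submodule.span_le]
    rintro d hd
    rw [Set.mem_vsub] at hd
    obtain ⟨x, hx, y, hy, rfl⟩ := hd
    simp only [SetLike.mem_coe, LinearMap.mem_ker]
    show ⟪b, x -ᵥ y⟫ = 0
    rw [vsub_eq_sub, inner_sub_right, h x hx, h y hy, sub_self]
  have hr2 : Module.rank ℝ (LinearMap.ker ib) = 2 := by
    rw [← Module.finrank_eq_rank, hker]; norm_num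
  exact le_trans (Submodule.rank_mono hle) hr2.le

lemma two_a_smul_inner {a : ℝ} (ha : a ≠ 0) (b x : E3) :
    ⟪x, (-(2 * a)⁻¹) • b⟫ = -(2 * a)⁻¹ * ⟪b, x⟫ := by
  rw [real_inner_smul_right, real_inner_comm]

lemma lfun_eq_key {a c : ℝ} {b : E3} (ha : a ≠ 0) (x : E3) :
    lfun a b c (lift x) = a * ‖x - ((-(2 * a)⁻¹) • b)‖ ^ 2
      - (a * ‖((-(2 * a)⁻¹) • b : E3)‖ ^ 2 - c) := by
  set u : E3 := (-(2 * a)⁻¹) • b with hu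
  have h2a : (2 * a) * (2 * a)⁻¹ = 1 := mul_inv_cancel₀ (by simpa using ha)
  rw [lfun_lift, norm_sub_sq_real, two_a_smul_inner ha b x,
    real_inner_self_eq_norm_sq x]
  linear_combination (⟪b, x⟫ : ℝ) * h2a + (-2 * ⟪b, x⟫ : ℝ) * (mul_inv_cancel₀ ha)

lemma cospherical_of_lfun {s : Set E3} {a c : ℝ} {b : E3} (ha : a ≠ 0)
    (h : ∀ x ∈ s, lfun a b c (lift x) = 0) : EuclideanGeometry.Cospherical s := by
  rcases s.eq_empty_or_nonempty with rfl | ⟨x₀, hx₀⟩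
  · exact ⟨0, 0, by simp⟩
  set u : E3 := (-(2 * a)⁻¹) • b with hu
  refine ⟨u, ‖x₀ - u‖, fun x hx => ?_⟩
  have k1 := lfun_eq_key (b := b) (c := c) ha x
  have k2 := lfun_eq_key (b := b) (c := c) ha x₀
  rw [h x hx] at k1
  rw [h x₀ hx₀] at k2
  have hsq : a * ‖x - u‖ ^ 2 = a * ‖x₀ - u‖ ^ 2 := by rw [← hu] at k1 k2; linarith
  have hsq' : ‖x - u‖ ^ 2 = ‖x₀ - u‖ ^ 2 := mul_left_cancel₀ ha hsq
  rw [dist_eq_norm, ← Real.sqrt_sq (norm_nonneg (x - u)), hsq',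
    Real.sqrt_sq (norm_nonneg (x₀ - u))]

/-- The zero set of a nondegenerate `lfun`, containing two distinct points, is a sphere
or plane. -/
lemma zero_set_sphere_or_plane {a c : ℝ} {b : E3} (hab : ¬ (a = 0 ∧ b = 0))
    {x₁ x₂ : E3} (h1 : lfun a b c (lift x₁) = 0) (h2 : lfun a b c (lift x₂) = 0)
    (hne : x₁ ≠ x₂) :
    ∃ s : Set E3, IsSphereOrPlane s ∧ ∀ x, x ∈ s ↔ lfun a b c (lift x) = 0 := by
  rcases eq_or_ne a 0 with rfl | ha
  · have hb : b ≠ 0 := fun hb => hab ⟨rfl, hb⟩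
    refine ⟨{x : E3 | ⟪b, x⟫ = -c}, Or.inr ⟨b, -c, hb, rfl⟩, fun x => ?_⟩
    rw [lfun_lift]
    constructor
    · intro hx; rw [Set.mem_setOf_eq] at hx; rw [hx]; ring
    · intro hx; rw [Set.mem_setOf_eq]; linarith
  · set u : E3 := (-(2 * a)⁻¹) • b with hu
    set K : ℝ := ‖x₁ - u‖ ^ 2 with hK
    have key : ∀ x : E3, lfun a b c (lift x) = a * ‖x - u‖ ^ 2 - a * K := by
      intro x
      have k1 := lfun_eq_key (b := b) (c := c) ha x
      have k2 := lfun_eq_key (b := b) (c := c) ha x₁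
      rw [h1] at k2
      rw [← hu] at k1 k2
      rw [k1, hK]
      linarith
    have hK2 : ‖x₂ - u‖ ^ 2 = K := by
      have := key x₂
      rw [h2] at this
      have h0 : a * ‖x₂ - u‖ ^ 2 = a * K := by linarith
      exact mul_left_cancel₀ ha h0
    have hKpos : 0 < K := by
      rcases lt_or_eq_of_le (by positivity : (0:ℝ) ≤ K) with hlt | heq
      · exact hlt
      · exfalso
        have hx1 : x₁ = u := by
          have : ‖x₁ - u‖ = 0 := by nlinarith [norm_nonneg (x₁ - u)]
          rwa [norm_eq_zero, sub_eq_zero] at this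
        have hx2 : x₂ = u := by
          have h0 : ‖x₂ - u‖ ^ 2 = 0 := by rw [hK2, ← heq]
          have : ‖x₂ - u‖ = 0 := by nlinarith [norm_nonneg (x₂ - u)]
          rwa [norm_eq_zero, sub_eq_zero] at this
        exact hne (hx1.trans hx2.symm)
    refine ⟨Metric.sphere u (Real.sqrt K), Or.inl ⟨u, Real.sqrt K, Real.sqrt_pos.2 hKpos, rfl⟩,
      fun x => ?_⟩
    rw [Metric.mem_sphere, dist_eq_norm, key]
    constructor
    · intro hx
      have : ‖x - u‖ ^ 2 = K := by rw [← Real.sq_sqrt hKpos.le, hx]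
      rw [this]; ring
    · intro hx
      have hxx : ‖x - u‖ ^ 2 = K := mul_left_cancel₀ ha (by linarith)
      rw [← Real.sqrt_sq (norm_nonneg (x - u)), hxx]

/-- Conversely, a sphere or plane is the zero set of a nondegenerate `lfun`. -/
lemma isSphereOrPlane_lfun {s : Set E3} (hs : IsSphereOrPlane s) :
    ∃ a b c, ¬ (a = 0 ∧ b = 0) ∧ ∀ x, x ∈ s ↔ lfun a b c (lift x) = 0 := by
  rcases hs with ⟨u, r, hr, rfl⟩ | ⟨u, d, hu, rfl⟩
  · refine ⟨1, (-2 : ℝ) • u, ⟪u, u⟫ - r ^ 2, by simp, fun x => ?_⟩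
    rw [Metric.mem_sphere, dist_eq_norm, lfun_lift, real_inner_smul_left]
    have h2 : ⟪x, x⟫ = ‖x‖ ^ 2 := real_inner_self_eq_norm_sq x
    have h3 : ⟪u, u⟫ = ‖u‖ ^ 2 := real_inner_self_eq_norm_sq u
    have h4 : ‖x - u‖ ^ 2 = ‖x‖ ^ 2 - 2 * ⟪x, u⟫ + ‖u‖ ^ 2 := norm_sub_sq_real x u
    have h5 : ⟪u, x⟫ = ⟪x, u⟫ := real_inner_comm x u
    constructor
    · intro hx
      have : ‖x - u‖ ^ 2 = r ^ 2 := by rw [hx]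
      nlinarith
    · intro hx
      have h6 : ‖x - u‖ ^ 2 = r ^ 2 := by nlinarith
      have := congrArg Real.sqrt h6
      rwa [Real.sqrt_sq (norm_nonneg _), Real.sqrt_sq hr.le] at this
  · refine ⟨0, u, -d, by simp [hu], fun x => ?_⟩
    rw [lfun_lift, Set.mem_setOf_eq]
    constructor
    · intro hx; rw [hx]; ring
    · intro hx; linarith

lemma coplanar_lfun {s : Set E3} (h : Coplanar ℝ s) :
    ∃ b : E3, b ≠ 0 ∧ ∃ c, ∀ x ∈ s, lfun 0 b c (lift x) = 0 := by
  rcases s.eq_empty_or_nonempty with rfl | ⟨x₀, hx₀⟩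
  · refine ⟨EuclideanSpace.single 0 1, ?_, 0, by simp⟩
    intro h0
    have := congrArg (fun v : E3 => v 0) h0
    simp [EuclideanSpace.single_apply] at this
  · set W : Submodule ℝ E3 := vectorSpan ℝ s with hW
    have hWfr : Module.finrank ℝ W ≤ 2 := by
      have hrank : Module.rank ℝ W ≤ 2 := h
      have := Module.finrank_eq_rank ℝ W  -- might need FiniteDimensional
      rw [← this] at hrank
      exact_mod_cast hrank
    have hE3 : Module.finrank ℝ E3 = 3 := by simp [finrank_euclideanSpace]
    have horth := Submodule.finrank_add_finrank_orthogonal (K := W) (𝕜 := ℝ)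
    have hWop : 1 ≤ Module.finrank ℝ Wᗮ := by omega
    have hexb : ∃ b ∈ Wᗮ, b ≠ 0 := by
      by_contra hcon
      push_neg at hcon
      have : Wᗮ = ⊥ := by
        rw [Submodule.eq_bot_iff]
        exact fun b hb => by_contra fun hb0 => hb0 (hcon b hb)
      rw [this, finrank_bot] at hWop
      omega
    obtain ⟨b, hbW, hb0⟩ := hexb
    refine ⟨b, hb0, -⟪b, x₀⟫, fun x hx => ?_⟩
    have hdiff : x -ᵥ x₀ ∈ W := vsub_mem_vectorSpan ℝ hx hx₀
    have hz : ⟪x -ᵥ x₀, b⟫ = 0 := (Submodule.mem_orthogonal W b).1 hbW _ hdiff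
    rw [lfun_lift]
    have : ⟪b, x - x₀⟫ = 0 := by
      rw [real_inner_comm]
      exact hz
    rw [inner_sub_right] at this
    linarith

/-- A concyclic set of points lifts into a subspace of dimension at most 3. -/
lemma concyclic_lift_subspace {s : Set E3} (hc : EuclideanGeometry.Concyclic s) :
    ∃ T : Submodule ℝ V5, Module.finrank ℝ T = 3 ∧ ∀ x ∈ s, lift x ∈ T := by
  obtain ⟨b₁, c₁, hL1⟩ := cospherical_lfun hc.1
  obtain ⟨b₂, hb₂, c₂, hL2⟩ := coplanar_lfun hc.2
  set Φ : V5 →ₗ[ℝ] ℝ × ℝ := (lfun 1 b₁ c₁).prod (lfun 0 b₂ c₂) with hΦ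
  have hsurj : Function.Surjective Φ := by
    rintro ⟨p, q⟩
    have hbb : ⟪b₂, b₂⟫ ≠ 0 := inner_self_ne_zero.2 hb₂
    refine ⟨((p - (q / ⟪b₂, b₂⟫) * ⟪b₁, b₂⟫ : ℝ), (q / ⟪b₂, b₂⟫) • b₂, (0:ℝ)), ?_⟩
    show ((lfun 1 b₁ c₁) _, (lfun 0 b₂ c₂) _) = (p, q)
    rw [Prod.mk.injEq]
    constructor
    · rw [lfun_apply, real_inner_smul_right]
      ring
    · rw [lfun_apply, real_inner_smul_right]
      simp only [zero_mul, mul_zero, add_zero, zero_add]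
      exact div_mul_cancel₀ q hbb
  have hrn := LinearMap.finrank_range_add_finrank_ker Φ
  rw [LinearMap.range_eq_top.2 hsurj, finrank_top] at hrn
  have hRR : Module.finrank ℝ (ℝ × ℝ) = 2 := by
    simp [Module.finrank_prod]
  have hker : Module.finrank ℝ (LinearMap.ker Φ) = 3 := by
    have := finrank_V5
    omega
  refine ⟨LinearMap.ker Φ, hker, fun x hx => ?_⟩
  rw [LinearMap.mem_ker, hΦ, LinearMap.prod_apply]
  have e1 := hL1 x hx
  have e2 := hL2 x hx
  show ((lfun 1 b₁ c₁) (lift x), (lfun 0 b₂ c₂) (lift x)) = (0, 0)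
  rw [Prod.mk.injEq]
  exact ⟨e1, e2⟩

lemma exists_not_mem_of_ne_top (p : Submodule ℝ V5) (h : p ≠ ⊤) : ∃ x, x ∉ p := by
  by_contra hc
  push_neg at hc
  exact h (Submodule.eq_top_iff'.2 hc)

lemma range_triple (x y z : V5) : Set.range ![x, y, z] = {x, y, z} := by
  ext v
  constructor
  · rintro ⟨i, rfl⟩
    fin_cases i <;> simp
  · intro hv
    simp only [Set.mem_insert_iff, Set.mem_singleton_iff] at hv
    rcases hv with rfl | rfl | rfl
    exacts [⟨0, rfl⟩, ⟨1, rfl⟩, ⟨2, rfl⟩]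

lemma finrank_span_lift_triple {x y z : E3} (h : ¬ Collinear ℝ ({x, y, z} : Set E3)) :
    Module.finrank ℝ (Submodule.span ℝ ({lift x, lift y, lift z} : Set V5)) = 3 := by
  have hli := indep_triple h
  have h3 := finrank_span_eq_card hli
  rw [range_triple] at h3
  simpa using h3

lemma finrank_span_insert_le (x : V5) (s : Set V5) [FiniteDimensional ℝ V5] :
    Module.finrank ℝ (Submodule.span ℝ (insert x s)) ≤
      Module.finrank ℝ (Submodule.span ℝ s) + 1 := by
  rw [Submodule.span_insert]
  have h := Submodule.finrank_sup_add_finrank_inf_eq (ℝ ∙ x) (Submodule.span ℝ s)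
  have h1 : Module.finrank ℝ (ℝ ∙ x) ≤ 1 := by
    rcases eq_or_ne x 0 with rfl | hx
    · rw [Submodule.span_zero_singleton]
      simp
    · rw [finrank_span_singleton hx]
  omega

lemma combo_zero {u v w : V5} (h : LinearIndependent ℝ ![u, v, w]) {p q r : ℝ}
    (hc : p • u + (q • v + r • w) = 0) : p = 0 ∧ q = 0 ∧ r = 0 := by
  have := Fintype.linearIndependent_iff.1 h ![p, q, r]
    (by simpa [Fin.sum_univ_three, add_assoc] using hc)
  exact ⟨this 0, this 1, this 2⟩

lemma mem_of_combo {u v w x : V5} {g₀ g₁ g₂ g₃ : ℝ} (h : g₀ ≠ 0)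
    (hc : g₀ • x + (g₁ • u + (g₂ • v + g₃ • w)) = 0) :
    x ∈ Submodule.span ℝ ({u, v, w} : Set V5) := by
  rw [mem_span_triple]
  refine ⟨-(g₁ / g₀), -(g₂ / g₀), -(g₃ / g₀), smul_right_injective V5 h ?_⟩
  show g₀ • x = g₀ • (-(g₁ / g₀) • u + -(g₂ / g₀) • v + -(g₃ / g₀) • w)
  have h3 : g₀ • x = -(g₁ • u + (g₂ • v + g₃ • w)) := eq_neg_of_add_eq_zero_left hc
  rw [h3, smul_add, smul_add, smul_smul, smul_smul, smul_smul,
    show g₀ * -(g₁ / g₀) = -g₁ from by field_simp [mul_comm],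
    show g₀ * -(g₂ / g₀) = -g₂ from by field_simp [mul_comm],
    show g₀ * -(g₃ / g₀) = -g₃ from by field_simp [mul_comm]]
  module

lemma lift_mem_span_of_four {s : Set E3} (hcc : ConcyclicOrCollinear s)
    {p₀ p₁ p₂ p₃ : E3} (h0 : p₀ ∈ s) (h1 : p₁ ∈ s) (h2 : p₂ ∈ s) (h3 : p₃ ∈ s)
    (hncol : ¬ Collinear ℝ ({p₁, p₂, p₃} : Set E3)) :
    lift p₀ ∈ Submodule.span ℝ ({lift p₁, lift p₂, lift p₃} : Set V5) := by
  rcases hcc with hc | hl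
  · obtain ⟨T, hT3, hTmem⟩ := concyclic_lift_subspace hc
    have hle : Submodule.span ℝ ({lift p₁, lift p₂, lift p₃} : Set V5) ≤ T := by
      rw [Submodule.span_le]
      rintro v hv
      simp only [Set.mem_insert_iff, Set.mem_singleton_iff] at hv
      rcases hv with rfl | rfl | rfl
      exacts [hTmem _ h1, hTmem _ h2, hTmem _ h3]
    have heq := Submodule.eq_of_le_of_finrank_le hle
      (by rw [hT3, finrank_span_lift_triple hncol])
    rw [heq]
    exact hTmem _ h0
  · refine absurd (hl.subset ?_) hncol
    intro t ht
    simp only [Set.mem_insert_iff, Set.mem_singleton_iff] at ht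
    rcases ht with rfl | rfl | rfl
    exacts [h1, h2, h3]

lemma concyclic_of_lift_dep {p₀ p₁ p₂ p₃ : E3}
    (h123 : ¬ Collinear ℝ ({p₁, p₂, p₃} : Set E3))
    (hdep : lift p₀ ∈ Submodule.span ℝ ({lift p₁, lift p₂, lift p₃} : Set V5)) :
    EuclideanGeometry.Concyclic ({p₀, p₁, p₂, p₃} : Set E3) := by
  set U := Submodule.span ℝ ({lift p₁, lift p₂, lift p₃} : Set V5) with hU
  have hU3 : Module.finrank ℝ U = 3 := finrank_span_lift_triple h123
  have hmemU : ∀ x ∈ ({p₀, p₁, p₂, p₃} : Set E3), lift x ∈ U := by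
    intro x hx
    simp only [Set.mem_insert_iff, Set.mem_singleton_iff] at hx
    rcases hx with rfl | rfl | rfl | rfl
    exacts [hdep, Submodule.subset_span (by simp), Submodule.subset_span (by simp),
      Submodule.subset_span (by simp)]
  have h100 : ((1:ℝ), (0:E3), (0:ℝ)) ∉ U := by
    intro hmem
    rw [hU, mem_span_triple] at hmem
    obtain ⟨α, β, γ, hcomb⟩ := hmem
    simp only [lift, Prod.smul_mk, Prod.mk_add_mk, Prod.mk.injEq, smul_eq_mul] at hcomb
    obtain ⟨hc1, hc2, hc3⟩ := hcomb
    have hai : AffineIndependent ℝ ![p₁, p₂, p₃] := affineIndependent_iff_not_collinear_set.2 h123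
    have hz := affineIndependent_iff.1 hai Finset.univ ![α, β, γ]
      (by simpa [Fin.sum_univ_three] using hc3.symm)
      (by simpa [Fin.sum_univ_three] using hc2.symm)
    have hα : α = 0 := hz 0 (Finset.mem_univ _)
    have hβ : β = 0 := hz 1 (Finset.mem_univ _)
    have hγ : γ = 0 := hz 2 (Finset.mem_univ _)
    rw [hα, hβ, hγ] at hc1
    norm_num at hc1
  obtain ⟨a, b, c, hvan, hnz⟩ := exists_lfun_ann U _ h100
  have ha : a ≠ 0 := by
    have hv : lfun a b c ((1:ℝ), (0:E3), (0:ℝ)) = a := by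
      rw [lfun_apply]; simp
    rwa [hv] at hnz
  have hcos := cospherical_of_lfun ha (fun x hx => hvan _ (hmemU x hx))
  set U' := Submodule.span ℝ (insert ((1:ℝ), (0:E3), (0:ℝ))
    ({lift p₁, lift p₂, lift p₃} : Set V5)) with hU'
  have hU'le : Module.finrank ℝ U' ≤ 4 := by
    have := finrank_span_insert_le ((1:ℝ), (0:E3), (0:ℝ)) ({lift p₁, lift p₂, lift p₃} : Set V5)
    rw [← hU'] at this
    rw [← hU] at this
    omega
  have hU'ne : U' ≠ ⊤ := by
    intro htop
    rw [htop, finrank_top, finrank_V5] at hU'le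
    omega
  obtain ⟨x, hx⟩ := exists_not_mem_of_ne_top U' hU'ne
  obtain ⟨a', b', c', hvan', hnz'⟩ := exists_lfun_ann U' x hx
  have hUle' : U ≤ U' := Submodule.span_mono (Set.subset_insert _ _)
  have ha' : a' = 0 := by
    have h1 := hvan' _ (Submodule.subset_span (Set.mem_insert _ _))
    rw [lfun_apply] at h1
    simpa using h1
  have hb' : b' ≠ 0 := by
    rintro rfl
    have h1 := hvan' _ (hUle' (hmemU p₁ (by simp)))
    rw [lfun_lift, ha'] at h1
    simp at h1
    subst h1
    rw [ha'] at hnz'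
    simp at hnz'
  have hcop : Coplanar ℝ ({p₀, p₁, p₂, p₃} : Set E3) := by
    refine coplanar_of_plane hb' (c := -c') (fun x hx => ?_)
    have h1 := hvan' _ (hUle' (hmemU x hx))
    rw [lfun_lift, ha'] at h1
    linarith
  exact ⟨hcos, hcop⟩

lemma span_nine_top (f : ℤ × ℤ → E3) (hns : NowhereSpherical f) (m n : ℤ) :
    Submodule.span ℝ (lift '' NinePts f m n) = ⊤ := by
  by_contra hne
  obtain ⟨x, hx⟩ := exists_not_mem_of_ne_top _ hne
  obtain ⟨a, b, c, hvan, hnz⟩ := exists_lfun_ann _ x hx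
  have hvan' : ∀ y ∈ NinePts f m n, lfun a b c (lift y) = 0 := fun y hy =>
    hvan _ (Submodule.subset_span ⟨y, hy, rfl⟩)
  rcases eq_or_ne a 0 with rfl | ha
  · rcases eq_or_ne b 0 with rfl | hb
    · have hZ9 : f (m, n) ∈ NinePts f m n := ⟨0, 0, by norm_num, by norm_num, by norm_num⟩
      have hc : c = 0 := by
        have h1 := hvan' _ hZ9
        rw [lfun_lift] at h1
        simpa using h1
      subst hc
      simp [lfun_apply] at hnz
    · exact (hns m n).2.2 (Or.inr (coplanar_of_plane hb (c := -c) (fun y hy => by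
        have h1 := hvan' y hy
        rw [lfun_lift] at h1
        linarith)))
  · exact (hns m n).2.2 (Or.inl (cospherical_of_lfun ha hvan'))

lemma diag_dep (f : ℤ × ℤ → E3) (hns : NowhereSpherical f)
    (hribbon : ∀ m m' n : ℤ, ConcyclicOrCollinear
      {f (m, n), f (m', n), f (m', n + 1), f (m, n + 1)})
    (m n : ℤ) {a : ℝ} {b : E3} {c : ℝ}
    (hZ : lfun a b c (lift (f (m, n))) = 0)
    (hA1 : lfun a b c (lift (f (m + (-1), n + (-1)))) = 0)
    (hA2 : lfun a b c (lift (f (m + 1, n + (-1)))) = 0)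
    (hA3 : lfun a b c (lift (f (m + (-1), n + 1))) = 0)
    (hA4 : lfun a b c (lift (f (m + 1, n + 1))) = 0)
    (hedge : ¬ (lfun a b c (lift (f (m + (-1), n))) = 0 ∧
      lfun a b c (lift (f (m + 1, n))) = 0 ∧
      lfun a b c (lift (f (m, n + (-1)))) = 0 ∧
      lfun a b c (lift (f (m, n + 1))) = 0)) :
    lift (f (m + (-1), n + (-1))) ∈ Submodule.span ℝ
      ({lift (f (m + 1, n + (-1))), lift (f (m + (-1), n + 1)),
        lift (f (m + 1, n + 1))} : Set V5) := by
  have habs : ∀ u : ℤ, u = -1 ∨ u = 0 ∨ u = 1 → |u| ≤ 1 := by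
    rintro u (rfl | rfl | rfl) <;> decide
  have hNC : ∀ u v u' v' u'' v'' : ℤ, (u = -1 ∨ u = 0 ∨ u = 1) → (v = -1 ∨ v = 0 ∨ v = 1) →
      (u' = -1 ∨ u' = 0 ∨ u' = 1) → (v' = -1 ∨ v' = 0 ∨ v' = 1) →
      (u'' = -1 ∨ u'' = 0 ∨ u'' = 1) → (v'' = -1 ∨ v'' = 0 ∨ v'' = 1) →
      ¬(u = u' ∧ v = v') → ¬(u = u'' ∧ v = v'') → ¬(u' = u'' ∧ v' = v'') →
      ¬ Collinear ℝ ({f (m + u, n + v), f (m + u', n + v'), f (m + u'', n + v'')} : Set E3) := by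
    intro u v u' v' u'' v'' hu hv hu' hv' hu'' hv'' hd1 hd2 hd3
    have hmem : ∀ (p q : ℤ), (p = -1 ∨ p = 0 ∨ p = 1) → (q = -1 ∨ q = 0 ∨ q = 1) →
        f (m + p, n + q) ∈ NinePts f m n := fun p q hp hq => ⟨p, q, habs p hp, habs q hq, rfl⟩
    have hne : ∀ (p q p' q' : ℤ), (p = -1 ∨ p = 0 ∨ p = 1) → (q = -1 ∨ q = 0 ∨ q = 1) →
        (p' = -1 ∨ p' = 0 ∨ p' = 1) → (q' = -1 ∨ q' = 0 ∨ q' = 1) → ¬(p = p' ∧ q = q') →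
        f (m + p, n + q) ≠ f (m + p', n + q') := fun p q p' q' hp hq hp' hq' hpq heq =>
      hpq ((hns m n).1 p q p' q' (habs p hp) (habs q hq) (habs p' hp') (habs q' hq') heq)
    exact (hns m n).2.1 _ _ _ (hmem u v hu hv) (hmem u' v' hu' hv') (hmem u'' v'' hu'' hv'')
      (hne u v u' v' hu hv hu' hv' hd1) (hne u' v' u'' v'' hu' hv' hu'' hv'' hd3)
      (hne u v u'' v'' hu hv hu'' hv'' hd2)
  -- non-collinearity facts (plain index form)
  have ncYZE1 : ¬ Collinear ℝ ({f (m, n + (-1)), f (m, n), f (m + (-1), n)} : Set E3) := by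
    simpa only [add_zero] using hNC 0 (-1) 0 0 (-1) 0 (by decide) (by decide) (by decide)
      (by decide) (by decide) (by decide) (by decide) (by decide) (by decide)
  have ncYZE2 : ¬ Collinear ℝ ({f (m, n + (-1)), f (m, n), f (m + 1, n)} : Set E3) := by
    simpa only [add_zero] using hNC 0 (-1) 0 0 1 0 (by decide) (by decide) (by decide)
      (by decide) (by decide) (by decide) (by decide) (by decide) (by decide)
  have ncY2ZE1 : ¬ Collinear ℝ ({f (m, n + 1), f (m, n), f (m + (-1), n)} : Set E3) := by
    simpa only [add_zero] using hNC 0 1 0 0 (-1) 0 (by decide) (by decide) (by decide)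
      (by decide) (by decide) (by decide) (by decide) (by decide) (by decide)
  have ncY2ZE2 : ¬ Collinear ℝ ({f (m, n + 1), f (m, n), f (m + 1, n)} : Set E3) := by
    simpa only [add_zero] using hNC 0 1 0 0 1 0 (by decide) (by decide) (by decide)
      (by decide) (by decide) (by decide) (by decide) (by decide) (by decide)
  have ncA1E1E2 : ¬ Collinear ℝ
      ({f (m + (-1), n + (-1)), f (m + (-1), n), f (m + 1, n)} : Set E3) := by
    simpa only [add_zero] using hNC (-1) (-1) (-1) 0 1 0 (by decide) (by decide) (by decide)
      (by decide) (by decide) (by decide) (by decide) (by decide) (by decide)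
  have ncA3E1E2 : ¬ Collinear ℝ
      ({f (m + (-1), n + 1), f (m + (-1), n), f (m + 1, n)} : Set E3) := by
    simpa only [add_zero] using hNC (-1) 1 (-1) 0 1 0 (by decide) (by decide) (by decide)
      (by decide) (by decide) (by decide) (by decide) (by decide) (by decide)
  have ncA1Y1Z : ¬ Collinear ℝ
      ({f (m + (-1), n + (-1)), f (m, n + (-1)), f (m, n)} : Set E3) := by
    simpa only [add_zero] using hNC (-1) (-1) 0 (-1) 0 0 (by decide) (by decide) (by decide)
      (by decide) (by decide) (by decide) (by decide) (by decide) (by decide)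
  have ncA1ZE1 : ¬ Collinear ℝ
      ({f (m + (-1), n + (-1)), f (m, n), f (m + (-1), n)} : Set E3) := by
    simpa only [add_zero] using hNC (-1) (-1) 0 0 (-1) 0 (by decide) (by decide) (by decide)
      (by decide) (by decide) (by decide) (by decide) (by decide) (by decide)
  have ncA2Y1Z : ¬ Collinear ℝ
      ({f (m + 1, n + (-1)), f (m, n + (-1)), f (m, n)} : Set E3) := by
    simpa only [add_zero] using hNC 1 (-1) 0 (-1) 0 0 (by decide) (by decide) (by decide)
      (by decide) (by decide) (by decide) (by decide) (by decide) (by decide)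
  have ncA2ZE2 : ¬ Collinear ℝ
      ({f (m + 1, n + (-1)), f (m, n), f (m + 1, n)} : Set E3) := by
    simpa only [add_zero] using hNC 1 (-1) 0 0 1 0 (by decide) (by decide) (by decide)
      (by decide) (by decide) (by decide) (by decide) (by decide) (by decide)
  have ncA3Y2Z : ¬ Collinear ℝ
      ({f (m + (-1), n + 1), f (m, n + 1), f (m, n)} : Set E3) := by
    simpa only [add_zero] using hNC (-1) 1 0 1 0 0 (by decide) (by decide) (by decide)
      (by decide) (by decide) (by decide) (by decide) (by decide) (by decide)
  have ncA3ZE1 : ¬ Collinear ℝ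
      ({f (m + (-1), n + 1), f (m, n), f (m + (-1), n)} : Set E3) := by
    simpa only [add_zero] using hNC (-1) 1 0 0 (-1) 0 (by decide) (by decide) (by decide)
      (by decide) (by decide) (by decide) (by decide) (by decide) (by decide)
  have ncA4Y2Z : ¬ Collinear ℝ
      ({f (m + 1, n + 1), f (m, n + 1), f (m, n)} : Set E3) := by
    simpa only [add_zero] using hNC 1 1 0 1 0 0 (by decide) (by decide) (by decide)
      (by decide) (by decide) (by decide) (by decide) (by decide) (by decide)
  have ncA4ZE2 : ¬ Collinear ℝ
      ({f (m + 1, n + 1), f (m, n), f (m + 1, n)} : Set E3) := by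
    simpa only [add_zero] using hNC 1 1 0 0 1 0 (by decide) (by decide) (by decide)
      (by decide) (by decide) (by decide) (by decide) (by decide) (by decide)
  -- ribbon circle relations
  have rib1 := hribbon (m + (-1)) m (n + (-1))
  rw [show n + (-1) + 1 = n from by ring] at rib1
  have hm1 : lift (f (m + (-1), n + (-1))) ∈ Submodule.span ℝ
      ({lift (f (m, n + (-1))), lift (f (m, n)), lift (f (m + (-1), n))} : Set V5) :=
    lift_mem_span_of_four rib1 (by simp) (by simp) (by simp) (by simp) ncYZE1
  obtain ⟨a₁, b₁, c₁, h₁⟩ := mem_span_triple.1 hm1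
  have rib2 := hribbon m (m + 1) (n + (-1))
  rw [show n + (-1) + 1 = n from by ring] at rib2
  have hm2 : lift (f (m + 1, n + (-1))) ∈ Submodule.span ℝ
      ({lift (f (m, n + (-1))), lift (f (m, n)), lift (f (m + 1, n))} : Set V5) :=
    lift_mem_span_of_four rib2 (by simp) (by simp) (by simp) (by simp) ncYZE2
  obtain ⟨a₂, b₂, c₂, h₂⟩ := mem_span_triple.1 hm2
  have rib3 := hribbon (m + (-1)) m n
  have hm3 : lift (f (m + (-1), n + 1)) ∈ Submodule.span ℝ
      ({lift (f (m, n + 1)), lift (f (m, n)), lift (f (m + (-1), n))} : Set V5) :=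
    lift_mem_span_of_four rib3 (by simp) (by simp) (by simp) (by simp) ncY2ZE1
  obtain ⟨a₃, b₃, c₃, h₃⟩ := mem_span_triple.1 hm3
  have rib4 := hribbon m (m + 1) n
  have hm4 : lift (f (m + 1, n + 1)) ∈ Submodule.span ℝ
      ({lift (f (m, n + 1)), lift (f (m, n)), lift (f (m + 1, n))} : Set V5) :=
    lift_mem_span_of_four rib4 (by simp) (by simp) (by simp) (by simp) ncY2ZE2
  obtain ⟨a₄, b₄, c₄, h₄⟩ := mem_span_triple.1 hm4
  have rib5 := hribbon (m + (-1)) (m + 1) (n + (-1))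
  rw [show n + (-1) + 1 = n from by ring] at rib5
  have hm5 : lift (f (m + 1, n + (-1))) ∈ Submodule.span ℝ
      ({lift (f (m + (-1), n + (-1))), lift (f (m + (-1), n)), lift (f (m + 1, n))} : Set V5) :=
    lift_mem_span_of_four rib5 (by simp) (by simp) (by simp) (by simp) ncA1E1E2
  obtain ⟨r₁, s₁, t₁, h₅⟩ := mem_span_triple.1 hm5
  have rib6 := hribbon (m + (-1)) (m + 1) n
  have hm6 : lift (f (m + 1, n + 1)) ∈ Submodule.span ℝ
      ({lift (f (m + (-1), n + 1)), lift (f (m + (-1), n)), lift (f (m + 1, n))} : Set V5) :=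
    lift_mem_span_of_four rib6 (by simp) (by simp) (by simp) (by simp) ncA3E1E2
  obtain ⟨r₂, s₂, t₂, h₆⟩ := mem_span_triple.1 hm6
  -- nonvanishing of coefficients
  have ha₁ : a₁ ≠ 0 := by
    rintro rfl
    rw [zero_smul, zero_add] at h₁
    exact not_eq_combo (indep_triple ncA1ZE1) b₁ c₁ h₁
  have hc₁ : c₁ ≠ 0 := by
    rintro rfl
    rw [zero_smul, add_zero] at h₁
    exact not_eq_combo (indep_triple ncA1Y1Z) a₁ b₁ h₁
  have ha₂ : a₂ ≠ 0 := by
    rintro rfl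
    rw [zero_smul, zero_add] at h₂
    exact not_eq_combo (indep_triple ncA2ZE2) b₂ c₂ h₂
  have hc₂ : c₂ ≠ 0 := by
    rintro rfl
    rw [zero_smul, add_zero] at h₂
    exact not_eq_combo (indep_triple ncA2Y1Z) a₂ b₂ h₂
  have ha₃ : a₃ ≠ 0 := by
    rintro rfl
    rw [zero_smul, zero_add] at h₃
    exact not_eq_combo (indep_triple ncA3ZE1) b₃ c₃ h₃
  have hc₃ : c₃ ≠ 0 := by
    rintro rfl
    rw [zero_smul, add_zero] at h₃
    exact not_eq_combo (indep_triple ncA3Y2Z) a₃ b₃ h₃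
  have ha₄ : a₄ ≠ 0 := by
    rintro rfl
    rw [zero_smul, zero_add] at h₄
    exact not_eq_combo (indep_triple ncA4ZE2) b₄ c₄ h₄
  have hc₄ : c₄ ≠ 0 := by
    rintro rfl
    rw [zero_smul, add_zero] at h₄
    exact not_eq_combo (indep_triple ncA4Y2Z) a₄ b₄ h₄
  -- the middle rows are not degenerate: lift Y1 (resp. Y2) is not in the span of the
  -- middle-row lifts
  have hnotmem : ∀ w : V5, (w = lift (f (m, n + (-1))) ∨ w = lift (f (m, n + 1))) →
      (lift (f (m, n + (-1))) ∈ Submodule.span ℝ (insert w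
        ({lift (f (m, n)), lift (f (m + (-1), n)), lift (f (m + 1, n))} : Set V5))) →
      (lift (f (m, n + 1)) ∈ Submodule.span ℝ (insert w
        ({lift (f (m, n)), lift (f (m + (-1), n)), lift (f (m + 1, n))} : Set V5))) →
      False := by
    intro w hw hY1P hY2P
    set P4 := Submodule.span ℝ (insert w
      ({lift (f (m, n)), lift (f (m + (-1), n)), lift (f (m + 1, n))} : Set V5)) with hP4
    have hZP : lift (f (m, n)) ∈ P4 := Submodule.subset_span (by simp)
    have hE1P : lift (f (m + (-1), n)) ∈ P4 := Submodule.subset_span (by simp)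
    have hE2P : lift (f (m + 1, n)) ∈ P4 := Submodule.subset_span (by simp)
    have hA1P : lift (f (m + (-1), n + (-1))) ∈ P4 := by
      rw [h₁]
      exact add_mem (add_mem (Submodule.smul_mem _ _ hY1P) (Submodule.smul_mem _ _ hZP))
        (Submodule.smul_mem _ _ hE1P)
    have hA2P : lift (f (m + 1, n + (-1))) ∈ P4 := by
      rw [h₂]
      exact add_mem (add_mem (Submodule.smul_mem _ _ hY1P) (Submodule.smul_mem _ _ hZP))
        (Submodule.smul_mem _ _ hE2P)
    have hA3P : lift (f (m + (-1), n + 1)) ∈ P4 := by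
      rw [h₃]
      exact add_mem (add_mem (Submodule.smul_mem _ _ hY2P) (Submodule.smul_mem _ _ hZP))
        (Submodule.smul_mem _ _ hE1P)
    have hA4P : lift (f (m + 1, n + 1)) ∈ P4 := by
      rw [h₄]
      exact add_mem (add_mem (Submodule.smul_mem _ _ hY2P) (Submodule.smul_mem _ _ hZP))
        (Submodule.smul_mem _ _ hE2P)
    have htop := span_nine_top f hns m n
    have hle : Submodule.span ℝ (lift '' NinePts f m n) ≤ P4 := by
      rw [Submodule.span_le]
      rintro x ⟨y, ⟨u, v, hu, hv, rfl⟩, rfl⟩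
      have hu' : u = -1 ∨ u = 0 ∨ u = 1 := by rw [abs_le] at hu; omega
      have hv' : v = -1 ∨ v = 0 ∨ v = 1 := by rw [abs_le] at hv; omega
      rcases hu' with rfl | rfl | rfl <;> rcases hv' with rfl | rfl | rfl <;>
        simp -failIfUnchanged only [add_zero] <;>
        first
          | exact hA1P | exact hE1P | exact hA3P | exact hY1P | exact hZP | exact hY2P
          | exact hA2P | exact hE2P | exact hA4P
    rw [htop, top_le_iff] at hle
    have h4 : Module.finrank ℝ P4 ≤ 4 := by
      have i1 := finrank_span_insert_le w
        ({lift (f (m, n)), lift (f (m + (-1), n)), lift (f (m + 1, n))} : Set V5)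
      have i2 := finrank_span_insert_le (lift (f (m, n)))
        ({lift (f (m + (-1), n)), lift (f (m + 1, n))} : Set V5)
      have i3 := finrank_span_insert_le (lift (f (m + (-1), n)))
        ({lift (f (m + 1, n))} : Set V5)
      have i4 : Module.finrank ℝ (Submodule.span ℝ ({lift (f (m + 1, n))} : Set V5)) ≤ 1 := by
        rcases eq_or_ne (lift (f (m + 1, n))) 0 with h0 | h0
        · rw [h0, Submodule.span_zero_singleton]; simp
        · rw [finrank_span_singleton h0]
      rw [← hP4] at i1
      omega
    rw [hle, finrank_top, finrank_V5] at h4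
    omega
  have hY1nm : lift (f (m, n + (-1))) ∉ Submodule.span ℝ
      ({lift (f (m, n)), lift (f (m + (-1), n)), lift (f (m + 1, n))} : Set V5) := by
    intro hmem
    refine hnotmem (lift (f (m, n + 1))) (Or.inr rfl) ?_ (Submodule.subset_span (by simp))
    exact Submodule.span_mono (Set.subset_insert _ _) hmem
  have hY2nm : lift (f (m, n + 1)) ∉ Submodule.span ℝ
      ({lift (f (m, n)), lift (f (m + (-1), n)), lift (f (m + 1, n))} : Set V5) := by
    intro hmem
    refine hnotmem (lift (f (m, n + (-1)))) (Or.inl rfl) (Submodule.subset_span (by simp)) ?_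
    exact Submodule.span_mono (Set.subset_insert _ _) hmem
  -- ribbon concyclicity of the wide quadrilaterals forces the key scalar identities
  have eq5 : a₂ • lift (f (m, n + (-1))) + b₂ • lift (f (m, n)) + c₂ • lift (f (m + 1, n))
      = r₁ • (a₁ • lift (f (m, n + (-1))) + b₁ • lift (f (m, n)) + c₁ • lift (f (m + (-1), n)))
        + s₁ • lift (f (m + (-1), n)) + t₁ • lift (f (m + 1, n)) := by
    rw [← h₁, ← h₂]
    exact h₅
  have hcomb : (a₂ - r₁ * a₁) • lift (f (m, n + (-1))) +
      ((b₂ - r₁ * b₁) • lift (f (m, n)) +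
        ((-(r₁ * c₁) - s₁) • lift (f (m + (-1), n)) +
          (c₂ - t₁) • lift (f (m + 1, n)))) = 0 := by
    have hsub := sub_eq_zero_of_eq eq5
    calc (a₂ - r₁ * a₁) • lift (f (m, n + (-1))) +
        ((b₂ - r₁ * b₁) • lift (f (m, n)) +
          ((-(r₁ * c₁) - s₁) • lift (f (m + (-1), n)) +
            (c₂ - t₁) • lift (f (m + 1, n))))
        = (a₂ • lift (f (m, n + (-1))) + b₂ • lift (f (m, n)) + c₂ • lift (f (m + 1, n)))
          - (r₁ • (a₁ • lift (f (m, n + (-1))) + b₁ • lift (f (m, n))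
              + c₁ • lift (f (m + (-1), n)))
            + s₁ • lift (f (m + (-1), n)) + t₁ • lift (f (m + 1, n))) := by module
      _ = 0 := hsub
  have hra : a₂ - r₁ * a₁ = 0 := by
    by_contra hne0
    exact hY1nm (mem_of_combo hne0 hcomb)
  have hrb : b₂ - r₁ * b₁ = 0 := by
    rw [hra, zero_smul, zero_add] at hcomb
    exact (combo_zero (indep_triple (by
      simpa only [add_zero] using hNC 0 0 (-1) 0 1 0 (by decide) (by decide) (by decide)
        (by decide) (by decide) (by decide) (by decide) (by decide) (by decide))) hcomb).1
  have hb5 : a₂ * b₁ = a₁ * b₂ := by linear_combination b₁ * hra - a₁ * hrb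
  have eq6 : a₄ • lift (f (m, n + 1)) + b₄ • lift (f (m, n)) + c₄ • lift (f (m + 1, n))
      = r₂ • (a₃ • lift (f (m, n + 1)) + b₃ • lift (f (m, n)) + c₃ • lift (f (m + (-1), n)))
        + s₂ • lift (f (m + (-1), n)) + t₂ • lift (f (m + 1, n)) := by
    rw [← h₃, ← h₄]
    exact h₆
  have hcomb2 : (a₄ - r₂ * a₃) • lift (f (m, n + 1)) +
      ((b₄ - r₂ * b₃) • lift (f (m, n)) +
        ((-(r₂ * c₃) - s₂) • lift (f (m + (-1), n)) +
          (c₄ - t₂) • lift (f (m + 1, n)))) = 0 := by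
    have hsub := sub_eq_zero_of_eq eq6
    calc (a₄ - r₂ * a₃) • lift (f (m, n + 1)) +
        ((b₄ - r₂ * b₃) • lift (f (m, n)) +
          ((-(r₂ * c₃) - s₂) • lift (f (m + (-1), n)) +
            (c₄ - t₂) • lift (f (m + 1, n))))
        = (a₄ • lift (f (m, n + 1)) + b₄ • lift (f (m, n)) + c₄ • lift (f (m + 1, n)))
          - (r₂ • (a₃ • lift (f (m, n + 1)) + b₃ • lift (f (m, n))
              + c₃ • lift (f (m + (-1), n)))
            + s₂ • lift (f (m + (-1), n)) + t₂ • lift (f (m + 1, n))) := by module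
      _ = 0 := hsub
  have hra2 : a₄ - r₂ * a₃ = 0 := by
    by_contra hne0
    exact hY2nm (mem_of_combo hne0 hcomb2)
  have hrb2 : b₄ - r₂ * b₃ = 0 := by
    rw [hra2, zero_smul, zero_add] at hcomb2
    exact (combo_zero (indep_triple (by
      simpa only [add_zero] using hNC 0 0 (-1) 0 1 0 (by decide) (by decide) (by decide)
        (by decide) (by decide) (by decide) (by decide) (by decide) (by decide))) hcomb2).1
  have hb6 : a₄ * b₃ = a₃ * b₄ := by linear_combination b₃ * hra2 - a₃ * hrb2
  -- evaluate the five-point functional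
  have e1 : a₁ * lfun a b c (lift (f (m, n + (-1)))) +
      c₁ * lfun a b c (lift (f (m + (-1), n))) = 0 := by
    have h0 := hA1
    rw [h₁, map_add, map_add, map_smul, map_smul, map_smul, smul_eq_mul, smul_eq_mul,
      smul_eq_mul, hZ, mul_zero] at h0
    linarith
  have e2 : a₂ * lfun a b c (lift (f (m, n + (-1)))) +
      c₂ * lfun a b c (lift (f (m + 1, n))) = 0 := by
    have h0 := hA2
    rw [h₂, map_add, map_add, map_smul, map_smul, map_smul, smul_eq_mul, smul_eq_mul,
      smul_eq_mul, hZ, mul_zero] at h0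
    linarith
  have e3 : a₃ * lfun a b c (lift (f (m, n + 1))) +
      c₃ * lfun a b c (lift (f (m + (-1), n))) = 0 := by
    have h0 := hA3
    rw [h₃, map_add, map_add, map_smul, map_smul, map_smul, smul_eq_mul, smul_eq_mul,
      smul_eq_mul, hZ, mul_zero] at h0
    linarith
  have e4 : a₄ * lfun a b c (lift (f (m, n + 1))) +
      c₄ * lfun a b c (lift (f (m + 1, n))) = 0 := by
    have h0 := hA4
    rw [h₄, map_add, map_add, map_smul, map_smul, map_smul, smul_eq_mul, smul_eq_mul,
      smul_eq_mul, hZ, mul_zero] at h0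
    linarith
  obtain ⟨P, hP⟩ : ∃ P, lfun a b c (lift (f (m + (-1), n))) = P := ⟨_, rfl⟩
  obtain ⟨Q, hQ⟩ : ∃ Q, lfun a b c (lift (f (m + 1, n))) = Q := ⟨_, rfl⟩
  obtain ⟨S, hS⟩ : ∃ S, lfun a b c (lift (f (m, n + (-1)))) = S := ⟨_, rfl⟩
  obtain ⟨T, hT⟩ : ∃ T, lfun a b c (lift (f (m, n + 1))) = T := ⟨_, rfl⟩
  rw [hP, hS] at e1
  rw [hQ, hS] at e2
  rw [hP, hT] at e3
  rw [hQ, hT] at e4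
  rw [hP, hQ, hS, hT] at hedge
  have hchainP : P = 0 → P = 0 ∧ Q = 0 ∧ S = 0 ∧ T = 0 := by
    intro h0
    have hS0 : S = 0 := by
      have h1 := e1
      rw [h0, mul_zero, add_zero] at h1
      exact (mul_eq_zero.1 h1).resolve_left ha₁
    have hQ0 : Q = 0 := by
      have h1 := e2
      rw [hS0, mul_zero, zero_add] at h1
      exact (mul_eq_zero.1 h1).resolve_left hc₂
    have hT0 : T = 0 := by
      have h1 := e3
      rw [h0, mul_zero, add_zero] at h1
      exact (mul_eq_zero.1 h1).resolve_left ha₃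
    exact ⟨h0, hQ0, hS0, hT0⟩
  have hchainQ : Q = 0 → P = 0 ∧ Q = 0 ∧ S = 0 ∧ T = 0 := by
    intro h0
    have hS0 : S = 0 := by
      have h1 := e2
      rw [h0, mul_zero, add_zero] at h1
      exact (mul_eq_zero.1 h1).resolve_left ha₂
    have hP0 : P = 0 := by
      have h1 := e1
      rw [hS0, mul_zero, zero_add] at h1
      exact (mul_eq_zero.1 h1).resolve_left hc₁
    exact hchainP hP0
  have hPne : P ≠ 0 := fun h0 => hedge (hchainP h0)
  have hQne : Q ≠ 0 := fun h0 => hedge (hchainQ h0)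
  have hF6 : a₂ * a₃ * (c₁ * c₄) = a₁ * a₄ * (c₂ * c₃) := by
    have hm1' : (a₁ * S) * (a₄ * T) = (c₁ * P) * (c₄ * Q) := by
      have hx : a₁ * S = -(c₁ * P) := by linarith
      have hy : a₄ * T = -(c₄ * Q) := by linarith
      rw [hx, hy]; ring
    have hm2' : (a₂ * S) * (a₃ * T) = (c₂ * Q) * (c₃ * P) := by
      have hx : a₂ * S = -(c₂ * Q) := by linarith
      have hy : a₃ * T = -(c₃ * P) := by linarith
      rw [hx, hy]; ring
    have hpq : P * Q ≠ 0 := mul_ne_zero hPne hQne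
    apply mul_left_cancel₀ hpq
    linear_combination (a₁ * a₄) * hm2' - (a₂ * a₃) * hm1'
  -- conclude the linear dependence of the diagonal lifts
  have hsc : (a₂ * (a₄ * c₃)) • lift (f (m + (-1), n + (-1)))
      = (a₁ * (a₄ * c₃)) • lift (f (m + 1, n + (-1)))
        + (a₂ * (a₄ * c₁)) • lift (f (m + (-1), n + 1))
        + (-(a₂ * (a₃ * c₁))) • lift (f (m + 1, n + 1)) := by
    rw [h₁, h₂, h₃, h₄]
    match_scalars
    · ring
    · linear_combination (a₄ * c₃) * hb5 - (a₂ * c₁) * hb6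
    · ring
    · linear_combination hF6
    · ring
  have hne0 : a₂ * (a₄ * c₃) ≠ 0 := mul_ne_zero ha₂ (mul_ne_zero ha₄ hc₃)
  have hmem' : (a₂ * (a₄ * c₃)) • lift (f (m + (-1), n + (-1))) ∈ Submodule.span ℝ
      ({lift (f (m + 1, n + (-1))), lift (f (m + (-1), n + 1)),
        lift (f (m + 1, n + 1))} : Set V5) := by
    rw [hsc]
    refine Submodule.add_mem _ (Submodule.add_mem _ ?_ ?_) ?_ <;>
      exact Submodule.smul_mem _ _ (Submodule.subset_span (by simp))
  exact (Submodule.smul_mem_iff _ hne0).1 hmem'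

lemma five_point_of_diag (f : ℤ × ℤ → E3) (hns : NowhereSpherical f) (m n : ℤ)
    (hdiag : ConcyclicOrCollinear
      ({f (m + (-1), n + (-1)), f (m + 1, n + (-1)), f (m + 1, n + 1),
        f (m + (-1), n + 1)} : Set E3)) :
    FivePointSphereCond f m n := by
  have habs : ∀ u : ℤ, u = -1 ∨ u = 0 ∨ u = 1 → |u| ≤ 1 := by
    rintro u (rfl | rfl | rfl) <;> decide
  have hne : ∀ (p q p' q' : ℤ), (p = -1 ∨ p = 0 ∨ p = 1) → (q = -1 ∨ q = 0 ∨ q = 1) →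
      (p' = -1 ∨ p' = 0 ∨ p' = 1) → (q' = -1 ∨ q' = 0 ∨ q' = 1) → ¬(p = p' ∧ q = q') →
      f (m + p, n + q) ≠ f (m + p', n + q') := fun p q p' q' hp hq hp' hq' hpq heq =>
    hpq ((hns m n).1 p q p' q' (habs p hp) (habs q hq) (habs p' hp') (habs q' hq') heq)
  have hmem9 : ∀ (p q : ℤ), (p = -1 ∨ p = 0 ∨ p = 1) → (q = -1 ∨ q = 0 ∨ q = 1) →
      f (m + p, n + q) ∈ NinePts f m n := fun p q hp hq => ⟨p, q, habs p hp, habs q hq, rfl⟩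
  unfold FivePointSphereCond
  simp only [sub_eq_add_neg]
  rcases hdiag with hcon | hl
  swap
  · exfalso
    have hsub : ({f (m + (-1), n + (-1)), f (m + 1, n + (-1)), f (m + 1, n + 1)} : Set E3)
        ⊆ ({f (m + (-1), n + (-1)), f (m + 1, n + (-1)), f (m + 1, n + 1),
            f (m + (-1), n + 1)} : Set E3) := by
      intro t ht
      simp only [Set.mem_insert_iff, Set.mem_singleton_iff] at ht ⊢
      tauto
    exact (hns m n).2.1 _ _ _ (hmem9 (-1) (-1) (by decide) (by decide))
      (hmem9 1 (-1) (by decide) (by decide)) (hmem9 1 1 (by decide) (by decide))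
      (hne (-1) (-1) 1 (-1) (by decide) (by decide) (by decide) (by decide) (by decide))
      (hne 1 (-1) 1 1 (by decide) (by decide) (by decide) (by decide) (by decide))
      (hne (-1) (-1) 1 1 (by decide) (by decide) (by decide) (by decide) (by decide))
      (hl.subset hsub)
  · obtain ⟨T, hT3, hTmem⟩ := concyclic_lift_subspace hcon
    set U := T ⊔ (ℝ ∙ lift (f (m, n))) with hU
    have hUA1 : lift (f (m + (-1), n + (-1))) ∈ U :=
      Submodule.mem_sup_left (hTmem _ (by simp))
    have hUA2 : lift (f (m + 1, n + (-1))) ∈ U := Submodule.mem_sup_left (hTmem _ (by simp))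
    have hUA3 : lift (f (m + (-1), n + 1)) ∈ U := Submodule.mem_sup_left (hTmem _ (by simp))
    have hUA4 : lift (f (m + 1, n + 1)) ∈ U := Submodule.mem_sup_left (hTmem _ (by simp))
    have hUZ : lift (f (m, n)) ∈ U :=
      Submodule.mem_sup_right (Submodule.mem_span_singleton_self _)
    have hUle : Module.finrank ℝ U ≤ 4 := by
      have h := Submodule.finrank_sup_add_finrank_inf_eq T (ℝ ∙ lift (f (m, n)))
      have h1 : Module.finrank ℝ (ℝ ∙ lift (f (m, n))) ≤ 1 := by
        rcases eq_or_ne (lift (f (m, n))) 0 with h0 | h0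
        · rw [h0, Submodule.span_zero_singleton]; simp
        · rw [finrank_span_singleton h0]
      rw [← hU] at h
      omega
    have hUne : U ≠ ⊤ := by
      intro htop
      rw [htop, finrank_top, finrank_V5] at hUle
      omega
    obtain ⟨x, hx⟩ := exists_not_mem_of_ne_top U hUne
    obtain ⟨a, b, c, hvan, hnz⟩ := exists_lfun_ann U x hx
    have hvZ := hvan _ hUZ
    have hvA1 := hvan _ hUA1
    have hvA2 := hvan _ hUA2
    have hvA3 := hvan _ hUA3
    have hvA4 := hvan _ hUA4
    have hnotall : ¬ (lfun a b c (lift (f (m + (-1), n))) = 0 ∧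
        lfun a b c (lift (f (m + 1, n))) = 0 ∧
        lfun a b c (lift (f (m, n + (-1)))) = 0 ∧
        lfun a b c (lift (f (m, n + 1))) = 0) := by
      rintro ⟨he1, he2, hy1, hy2⟩
      have hall : ∀ y ∈ NinePts f m n, lfun a b c (lift y) = 0 := by
        rintro y ⟨u, v, hu, hv, rfl⟩
        have hu' : u = -1 ∨ u = 0 ∨ u = 1 := by rw [abs_le] at hu; omega
        have hv' : v = -1 ∨ v = 0 ∨ v = 1 := by rw [abs_le] at hv; omega
        rcases hu' with rfl | rfl | rfl <;> rcases hv' with rfl | rfl | rfl <;>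
          simp -failIfUnchanged only [add_zero] <;>
          first
            | exact hvA1 | exact he1 | exact hvA3 | exact hy1 | exact hvZ | exact hy2
            | exact hvA2 | exact he2 | exact hvA4
      have hxmem : x ∈ Submodule.span ℝ (lift '' NinePts f m n) := by
        rw [span_nine_top f hns m n]
        trivial
      have hker : Submodule.span ℝ (lift '' NinePts f m n) ≤ LinearMap.ker (lfun a b c) := by
        rw [Submodule.span_le]
        rintro w ⟨y, hy, rfl⟩
        exact hall y hy
      exact hnz (hker hxmem)
    have hab : ¬ (a = 0 ∧ b = 0) := by
      rintro ⟨rfl, rfl⟩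
      have hc0 : c = 0 := by
        rw [lfun_lift] at hvZ
        simpa using hvZ
      subst hc0
      simp [lfun_apply] at hnz
    have hZA1 : f (m, n) ≠ f (m + (-1), n + (-1)) := by
      simpa only [add_zero] using hne 0 0 (-1) (-1) (by decide) (by decide) (by decide)
        (by decide) (by decide)
    obtain ⟨Sset, hSP, hSiff⟩ := zero_set_sphere_or_plane hab hvZ hvA1 hZA1
    refine ⟨Sset, hSP, (hSiff _).2 hvZ, (hSiff _).2 hvA1, (hSiff _).2 hvA2,
      (hSiff _).2 hvA4, (hSiff _).2 hvA3, ?_⟩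
    rintro ⟨hq1, hq2, hq3, hq4⟩
    exact hnotall ⟨(hSiff _).1 hq1, (hSiff _).1 hq2, (hSiff _).1 hq3, (hSiff _).1 hq4⟩

end Stmt10

set_option maxHeartbeats 1000000

/-- A nowhere-spherical net whose `+`-coordinate ribbons are multi-circular
(as for a discrete channel surface with circular direction `+`) is isothermic if and only if
the four diagonal neighbours of each vertex are concircular. -/
theorem isothermic_iff_diagonal_neighbours_concircular
    (f : ℤ × ℤ → E3) (hns : NowhereSpherical f)
    (hribbon : ∀ m m' n : ℤ, ConcyclicOrCollinear
      {f (m, n), f (m', n), f (m', n + 1), f (m, n + 1)}) :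
    (∀ m n : ℤ, FivePointSphereCond f m n) ↔
      (∀ m n : ℤ, ConcyclicOrCollinear
        {f (m - 1, n - 1), f (m + 1, n - 1), f (m + 1, n + 1), f (m - 1, n + 1)}) := by
  constructor
  · intro h5 m n
    obtain ⟨Sset, hSP, hmZ, hmA1, hmA2, hmA4, hmA3, hnedge⟩ := h5 m n
    simp only [sub_eq_add_neg] at hmA1 hmA2 hmA3 hmA4 hnedge
    obtain ⟨a, b, c, hab, hiff⟩ := Stmt10.isSphereOrPlane_lfun hSP
    have hZv := (hiff _).1 hmZ
    have hA1v := (hiff _).1 hmA1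
    have hA2v := (hiff _).1 hmA2
    have hA3v := (hiff _).1 hmA3
    have hA4v := (hiff _).1 hmA4
    have hedge' : ¬ (Stmt10.lfun a b c (Stmt10.lift (f (m + (-1), n))) = 0 ∧
        Stmt10.lfun a b c (Stmt10.lift (f (m + 1, n))) = 0 ∧
        Stmt10.lfun a b c (Stmt10.lift (f (m, n + (-1)))) = 0 ∧
        Stmt10.lfun a b c (Stmt10.lift (f (m, n + 1))) = 0) := by
      rintro ⟨q1, q2, q3, q4⟩
      exact hnedge ⟨(hiff _).2 q1, (hiff _).2 q2, (hiff _).2 q3, (hiff _).2 q4⟩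
    have hdep := Stmt10.diag_dep f hns hribbon m n hZv hA1v hA2v hA3v hA4v hedge'
    have habs : ∀ u : ℤ, u = -1 ∨ u = 0 ∨ u = 1 → |u| ≤ 1 := by
      rintro u (rfl | rfl | rfl) <;> decide
    have hne : ∀ (p q p' q' : ℤ), (p = -1 ∨ p = 0 ∨ p = 1) → (q = -1 ∨ q = 0 ∨ q = 1) →
        (p' = -1 ∨ p' = 0 ∨ p' = 1) → (q' = -1 ∨ q' = 0 ∨ q' = 1) → ¬(p = p' ∧ q = q') →
        f (m + p, n + q) ≠ f (m + p', n + q') := fun p q p' q' hp hq hp' hq' hpq heq =>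
      hpq ((hns m n).1 p q p' q' (habs p hp) (habs q hq) (habs p' hp') (habs q' hq') heq)
    have hmem9 : ∀ (p q : ℤ), (p = -1 ∨ p = 0 ∨ p = 1) → (q = -1 ∨ q = 0 ∨ q = 1) →
        f (m + p, n + q) ∈ NinePts f m n := fun p q hp hq => ⟨p, q, habs p hp, habs q hq, rfl⟩
    have hnc : ¬ Collinear ℝ ({f (m + 1, n + (-1)), f (m + (-1), n + 1),
        f (m + 1, n + 1)} : Set E3) :=
      (hns m n).2.1 _ _ _ (hmem9 1 (-1) (by decide) (by decide))
        (hmem9 (-1) 1 (by decide) (by decide)) (hmem9 1 1 (by decide) (by decide))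
        (hne 1 (-1) (-1) 1 (by decide) (by decide) (by decide) (by decide) (by decide))
        (hne (-1) 1 1 1 (by decide) (by decide) (by decide) (by decide) (by decide))
        (hne 1 (-1) 1 1 (by decide) (by decide) (by decide) (by decide) (by decide))
    have hcon := Stmt10.concyclic_of_lift_dep hnc hdep
    simp only [sub_eq_add_neg]
    have hsets : ({f (m + (-1), n + (-1)), f (m + 1, n + (-1)), f (m + 1, n + 1),
        f (m + (-1), n + 1)} : Set E3) = ({f (m + (-1), n + (-1)), f (m + 1, n + (-1)),
        f (m + (-1), n + 1), f (m + 1, n + 1)} : Set E3) := by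
      ext t
      simp only [Set.mem_insert_iff, Set.mem_singleton_iff]
      tauto
    rw [hsets]
    exact Or.inl hcon
  · intro hdiag m n
    have h := hdiag m n
    simp only [sub_eq_add_neg] at h
    exact Stmt10.five_point_of_diag f hns m n h
end
end

section
/- Let (ρₙ)ₙ∈ℤ be positive real numbers, (zₙ)ₙ∈ℤ real numbers and (θₘ)ₘ∈ℤ real numbers, and define the discrete surface of revolution f : ℤ² → ℝ³ by f(m,n) := (ρₙ cos θₘ, ρₙ sin θₘ, zₙ). Then for every (m,n) the four diagonal neighbours f(m−1,n−1), f(m+1,n−1), f(m+1,n+1), f(m−1,n+1) are concyclic. (This is the symmetry property by which discrete surfaces of revolution satisfy the discrete isothermic 5-point-sphere condition; it is the converse direction of the discrete Vessiot theorem for surfaces of revolution.) -/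
noncomputable section

/-!
In cylindrical coordinates the four diagonal neighbours are `(r, θ, z₁)`, `(r, φ, z₁)`,
`(s, φ, z₂)`, `(s, θ, z₂)`: an isosceles trapezoid, mirror-symmetric in the meridian plane of
angle `(θ + φ) / 2`. Its parallel sides are `r (u φ - u θ)` and `s (u φ - u θ)`, where `u α` is
the horizontal unit vector of angle `α`, so it is coplanar. A point `(t, (θ + φ) / 2, c)` of the
mirror plane is equidistant from each mirror pair, and being equidistant from `(r, θ, z₁)` and
`(s, θ, z₂)` is one linear equation in `(t, c)`. It is solvable unless `z₁ = z₂` and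
`cos ((θ - φ) / 2) = 0`; then `θ` and `φ` are antipodal and all four points lie on one
horizontal line through the axis.
-/

open Real

theorem coplanar_of_vsub_eq_smul_of_vsub_eq_smul {k V P : Type*} [DivisionRing k]
    [AddCommGroup V] [Module k V] [AddTorsor V P] {a b c d : P} {v : V} {r s : k}
    (hab : b -ᵥ a = r • v) (hdc : c -ᵥ d = s • v) : Coplanar k {a, b, c, d} := by
  classical
  set W := Submodule.span k (({v, d -ᵥ a} : Finset V) : Set V)
  have hv : v ∈ W := Submodule.subset_span (by simp)
  have hda : d -ᵥ a ∈ W := Submodule.subset_span (by simp)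
  have hspan : vectorSpan k {a, b, c, d} ≤ W := by
    rw [vectorSpan_eq_span_vsub_set_right k (Set.mem_insert a _), Submodule.span_le]
    simp only [Set.image_insert_eq, Set.image_singleton, Set.insert_subset_iff,
      Set.singleton_subset_iff, SetLike.mem_coe]
    refine ⟨by simp, by simpa [hab] using W.smul_mem r hv, ?_, hda⟩
    rw [← vsub_add_vsub_cancel c d a, hdc]
    exact W.add_mem (W.smul_mem s hv) hda
  calc Module.rank k (vectorSpan k {a, b, c, d})
      ≤ Module.rank k W := Submodule.rank_mono hspan
    _ ≤ ({v, d -ᵥ a} : Finset V).card := rank_span_finset_le _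
    _ ≤ 2 := by exact_mod_cast Finset.card_le_two

def cylindrical (r θ z : ℝ) : E3 :=
  (WithLp.equiv 2 (Fin 3 → ℝ)).symm ![r * cos θ, r * sin θ, z]

theorem cylindrical_eq_smul_add (r θ z : ℝ) :
    cylindrical r θ z = r • cylindrical 1 θ 0 + cylindrical 0 θ z := by
  ext i; fin_cases i <;> simp [cylindrical]

theorem cylindrical_vsub_cylindrical (r θ φ z : ℝ) :
    cylindrical r φ z -ᵥ cylindrical r θ z = r • (cylindrical 1 φ 0 - cylindrical 1 θ 0) := by
  ext i; fin_cases i <;> simp [cylindrical] <;> ring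

theorem dist_cylindrical_sq (r θ z s φ w : ℝ) :
    dist (cylindrical r θ z) (cylindrical s φ w) ^ 2
      = r ^ 2 + s ^ 2 - 2 * r * s * cos (θ - φ) + (z - w) ^ 2 := by
  rw [EuclideanSpace.dist_eq, sq_sqrt (by positivity), Fin.sum_univ_three]
  simp only [cylindrical, Real.dist_eq, sq_abs, cos_sub, WithLp.equiv_symm_apply,
    Matrix.cons_val_zero, Matrix.cons_val_one, Matrix.cons_val, add_left_inj]
  linear_combination r ^ 2 * sin_sq_add_cos_sq θ + s ^ 2 * sin_sq_add_cos_sq φ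

theorem dist_cylindrical_bisector (r θ φ z t c : ℝ) :
    dist (cylindrical r θ z) (cylindrical t ((θ + φ) / 2) c)
      = dist (cylindrical r φ z) (cylindrical t ((θ + φ) / 2) c) := by
  rw [← sq_eq_sq₀ dist_nonneg dist_nonneg, dist_cylindrical_sq, dist_cylindrical_sq,
    show θ - (θ + φ) / 2 = -(φ - (θ + φ) / 2) by ring, cos_neg]

theorem exists_dist_cylindrical_eq (r s z₁ z₂ θ φ : ℝ)
    (h : cos ((θ - φ) / 2) ≠ 0 ∨ z₁ ≠ z₂) : ∃ t c : ℝ,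
      dist (cylindrical r θ z₁) (cylindrical t ((θ + φ) / 2) c)
        = dist (cylindrical s θ z₂) (cylindrical t ((θ + φ) / 2) c) := by
  suffices ∃ t c : ℝ, r ^ 2 + t ^ 2 - 2 * r * t * cos ((θ - φ) / 2) + (z₁ - c) ^ 2
      = s ^ 2 + t ^ 2 - 2 * s * t * cos ((θ - φ) / 2) + (z₂ - c) ^ 2 by
    obtain ⟨t, c, htc⟩ := this
    refine ⟨t, c, ?_⟩
    rw [← sq_eq_sq₀ dist_nonneg dist_nonneg, dist_cylindrical_sq, dist_cylindrical_sq,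
      show θ - (θ + φ) / 2 = (θ - φ) / 2 by ring, htc]
  by_cases hz : z₁ = z₂
  · have hcos := h.resolve_right (not_not.2 hz)
    refine ⟨(r + s) / (2 * cos ((θ - φ) / 2)), z₁, ?_⟩
    subst hz
    field_simp
    ring
  · have hz' : z₁ - z₂ ≠ 0 := sub_ne_zero.2 hz
    refine ⟨0, (r ^ 2 - s ^ 2 + z₁ ^ 2 - z₂ ^ 2) / (2 * (z₁ - z₂)), ?_⟩
    field_simp
    ring

theorem cylindrical_eq_neg_of_cos_half_sub_eq_zero {θ φ : ℝ} (h : cos ((θ - φ) / 2) = 0)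
    (r z : ℝ) : cylindrical r φ z = cylindrical (-r) θ z := by
  have hφ : φ = θ - 2 * ((θ - φ) / 2) := by ring
  have hsin : sin (2 * ((θ - φ) / 2)) = 0 := by rw [sin_two_mul, h]; ring
  have hcos : cos (2 * ((θ - φ) / 2)) = -1 := by rw [cos_two_mul, h]; ring
  simp only [cylindrical]
  rw [hφ, cos_sub, sin_sub, hsin, hcos]
  congr 1
  ext i; fin_cases i <;> simp

theorem collinear_range_cylindrical (θ z : ℝ) :
    Collinear ℝ (Set.range fun r => cylindrical r θ z) := by
  rw [collinear_iff_exists_forall_eq_smul_vadd]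
  exact ⟨cylindrical 0 θ z, cylindrical 1 θ 0, by
    rintro _ ⟨r, rfl⟩
    exact ⟨r, cylindrical_eq_smul_add r θ z⟩⟩

theorem concyclic_cylindrical_trapezoid (r s z₁ z₂ θ φ : ℝ)
    (h : cos ((θ - φ) / 2) ≠ 0 ∨ z₁ ≠ z₂) : EuclideanGeometry.Concyclic
      {cylindrical r θ z₁, cylindrical r φ z₁, cylindrical s φ z₂, cylindrical s θ z₂} := by
  refine ⟨?_, coplanar_of_vsub_eq_smul_of_vsub_eq_smul (cylindrical_vsub_cylindrical r θ φ z₁)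
    (cylindrical_vsub_cylindrical s θ φ z₂)⟩
  obtain ⟨t, c, htc⟩ := exists_dist_cylindrical_eq r s z₁ z₂ θ φ h
  refine ⟨cylindrical t ((θ + φ) / 2) c, dist (cylindrical r θ z₁) (cylindrical t ((θ + φ) / 2) c),
    ?_⟩
  simp only [Set.mem_insert_iff, Set.mem_singleton_iff]
  rintro p (rfl | rfl | rfl | rfl)
  · rfl
  · exact (dist_cylindrical_bisector r θ φ z₁ t c).symm
  · rw [htc, dist_cylindrical_bisector]
  · exact htc.symm

theorem concyclicOrCollinear_cylindrical_trapezoid (r s z₁ z₂ θ φ : ℝ) : ConcyclicOrCollinear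
    {cylindrical r θ z₁, cylindrical r φ z₁, cylindrical s φ z₂, cylindrical s θ z₂} := by
  by_cases h : cos ((θ - φ) / 2) ≠ 0 ∨ z₁ ≠ z₂
  · exact Or.inl (concyclic_cylindrical_trapezoid r s z₁ z₂ θ φ h)
  · push Not at h
    obtain ⟨hcos, rfl⟩ := h
    refine Or.inr ((collinear_range_cylindrical θ z₁).subset ?_)
    rw [cylindrical_eq_neg_of_cos_half_sub_eq_zero hcos r,
      cylindrical_eq_neg_of_cos_half_sub_eq_zero hcos s]
    rintro p (rfl | rfl | rfl | rfl) <;> exact ⟨_, rfl⟩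

theorem surface_of_revolution_diagonals_concircular_general
    (ρ : ℤ → ℝ) (z θ : ℤ → ℝ)
    (f : ℤ × ℤ → E3)
    (hf : ∀ m n : ℤ, f (m, n) = (WithLp.equiv 2 (Fin 3 → ℝ)).symm
      ![ρ n * Real.cos (θ m), ρ n * Real.sin (θ m), z n]) :
    ∀ m n : ℤ, ConcyclicOrCollinear
      {f (m - 1, n - 1), f (m + 1, n - 1), f (m + 1, n + 1), f (m - 1, n + 1)} := by
  intro m n
  rw [hf, hf, hf, hf]
  exact concyclicOrCollinear_cylindrical_trapezoid (ρ (n - 1)) (ρ (n + 1)) (z (n - 1)) (z (n + 1))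
    (θ (m - 1)) (θ (m + 1))

/-- For a discrete surface of revolution
`f(m,n) = (ρₙ cos θₘ, ρₙ sin θₘ, zₙ)` the four diagonal neighbours of every vertex are
concircular. -/
theorem surface_of_revolution_diagonals_concircular
    (ρ : ℤ → ℝ) (hρ : ∀ n : ℤ, 0 < ρ n) (z θ : ℤ → ℝ)
    (f : ℤ × ℤ → E3)
    (hf : ∀ m n : ℤ, f (m, n) = (WithLp.equiv 2 (Fin 3 → ℝ)).symm
      ![ρ n * Real.cos (θ m), ρ n * Real.sin (θ m), z n]) :
    ∀ m n : ℤ, ConcyclicOrCollinear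
      {f (m - 1, n - 1), f (m + 1, n - 1), f (m + 1, n + 1), f (m - 1, n + 1)} :=
  surface_of_revolution_diagonals_concircular_general ρ z θ f hf
end
end

section
/- Let α ∈ (0,π), let (θₘ)ₘ∈ℤ be real numbers and (λₙ)ₙ∈ℤ positive real numbers, and define the discrete circular cone f : ℤ² → ℝ³ by f(m,n) := λₙ·(sin α cos θₘ, sin α sin θₘ, cos α). Then for every (m,n) the four diagonal neighbours f(m−1,n−1), f(m+1,n−1), f(m+1,n+1), f(m−1,n+1) are concyclic. (This is the symmetry property by which discrete cones satisfy the discrete isothermic 5-point-sphere condition; it is the converse direction of the discrete Vessiot theorem for cones.) -/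
noncomputable section

/-!
The four diagonal neighbours are `μA, μB, νB, νA`, where `A, B` are the unit rulings of the cone
at `θ (m - 1)`, `θ (m + 1)` and `μ = λ (n - 1)`, `ν = λ (n + 1)`. They form an isosceles trapezoid,
symmetric under the reflection of the plane `span {A, B}` exchanging `A` and `B`, so a centre on
the axis `ℝ (A + B)` is equidistant from all four; when `A = -B` they lie on the line `ℝ A`.
-/

section SpanRank

variable {k V : Type*} [Field k] [AddCommGroup V] [Module k V]

theorem rank_vectorSpan_le_of_subset_span {s t : Set V} (h : s ⊆ Submodule.span k t) :
    Module.rank k (vectorSpan k s) ≤ Cardinal.mk t := by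
  refine (Submodule.rank_mono ?_).trans (rank_span_le t)
  rw [vectorSpan_def, Submodule.span_le]
  rintro _ ⟨p, hp, q, hq, rfl⟩
  exact Submodule.sub_mem _ (h hp) (h hq)

theorem collinear_of_subset_span_singleton {s : Set V} {v : V} (h : s ⊆ k ∙ v) :
    Collinear k s :=
  (rank_vectorSpan_le_of_subset_span h).trans (by simp)

theorem coplanar_of_subset_span_pair {s : Set V} {u v : V}
    (h : s ⊆ Submodule.span k {u, v}) : Coplanar k s :=
  (rank_vectorSpan_le_of_subset_span h).trans <|
    (Cardinal.mk_insert_le ..).trans (by simp [one_add_one_eq_two])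

end SpanRank

section IsoscelesTrapezoid

variable {V : Type*} [NormedAddCommGroup V] [InnerProductSpace ℝ V] {A B : V}

open RealInnerProductSpace

theorem norm_smul_sub_smul_add_comm (h : ‖A‖ = ‖B‖) (t x : ℝ) :
    ‖t • A - x • (A + B)‖ = ‖t • B - x • (A + B)‖ := by
  rw [← sq_eq_sq₀ (norm_nonneg _) (norm_nonneg _)]
  simp only [norm_sub_sq_real, norm_smul, inner_smul_left, inner_smul_right, inner_add_right,
    norm_add_sq_real, real_inner_self_eq_norm_sq, real_inner_comm A B, h, mul_pow,
    Real.norm_eq_abs, sq_abs, RCLike.conj_to_real]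
  ring

theorem norm_smul_sub_eq_of_norm_eq (h : ‖A‖ = ‖B‖) (hAB : A + B ≠ 0) (μ ν : ℝ) :
    ‖μ • A - (‖A‖ ^ 2 * (μ + ν) / ‖A + B‖ ^ 2) • (A + B)‖ =
      ‖ν • A - (‖A‖ ^ 2 * (μ + ν) / ‖A + B‖ ^ 2) • (A + B)‖ := by
  set x := ‖A‖ ^ 2 * (μ + ν) / ‖A + B‖ ^ 2
  have hx : x * ‖A + B‖ ^ 2 = ‖A‖ ^ 2 * (μ + ν) := div_mul_cancel₀ _ (by positivity)
  have key : 2 * ⟪A, A + B⟫ = ‖A + B‖ ^ 2 := by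
    rw [inner_add_right, norm_add_sq_real, real_inner_self_eq_norm_sq, h]; ring
  rw [← sq_eq_sq₀ (norm_nonneg _) (norm_nonneg _)]
  simp only [norm_sub_sq_real, norm_smul, inner_smul_left, inner_smul_right, mul_pow,
    Real.norm_eq_abs, sq_abs, RCLike.conj_to_real]
  -- the squared distances differ by `(μ - ν) (‖A‖² (μ + ν) - x ‖A + B‖²)`
  linear_combination (ν - μ) * hx + (ν - μ) * x * key

theorem cospherical_smul_smul_of_norm_eq (h : ‖A‖ = ‖B‖) (hAB : A + B ≠ 0) (μ ν : ℝ) :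
    EuclideanGeometry.Cospherical ({μ • A, μ • B, ν • B, ν • A} : Set V) := by
  set c := (‖A‖ ^ 2 * (μ + ν) / ‖A + B‖ ^ 2) • (A + B)
  refine ⟨c, ‖μ • A - c‖, ?_⟩
  simp only [Set.mem_insert_iff, Set.mem_singleton_iff]
  rintro p (rfl | rfl | rfl | rfl) <;>
    simp only [dist_eq_norm, c, ← norm_smul_sub_smul_add_comm h,
      norm_smul_sub_eq_of_norm_eq h hAB μ ν]

theorem concyclic_or_collinear_smul_smul (h : ‖A‖ = ‖B‖) (μ ν : ℝ) :
    EuclideanGeometry.Concyclic ({μ • A, μ • B, ν • B, ν • A} : Set V) ∨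
      Collinear ℝ ({μ • A, μ • B, ν • B, ν • A} : Set V) := by
  by_cases hAB : A + B = 0
  · right
    rw [add_eq_zero_iff_eq_neg'] at hAB
    refine collinear_of_subset_span_singleton (v := A) ?_
    simp [Set.insert_subset_iff, hAB, Submodule.smul_mem, Submodule.mem_span_singleton_self]
  · left
    refine ⟨cospherical_smul_smul_of_norm_eq h hAB μ ν,
      coplanar_of_subset_span_pair (u := A) (v := B) ?_⟩
    have hA : A ∈ Submodule.span ℝ {A, B} := Submodule.subset_span (by simp)
    have hB : B ∈ Submodule.span ℝ {A, B} := Submodule.subset_span (by simp)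
    simp [Set.insert_subset_iff, Submodule.smul_mem _ _ hA, Submodule.smul_mem _ _ hB]

end IsoscelesTrapezoid

def circularConeRuling (α φ : ℝ) : E3 :=
  (WithLp.equiv 2 (Fin 3 → ℝ)).symm
    ![Real.sin α * Real.cos φ, Real.sin α * Real.sin φ, Real.cos α]

theorem norm_circularConeRuling (α φ : ℝ) : ‖circularConeRuling α φ‖ = 1 := by
  rw [EuclideanSpace.norm_eq, Real.sqrt_eq_one]
  simp [circularConeRuling, Fin.sum_univ_three, mul_pow]
  linear_combination Real.sin α ^ 2 * Real.sin_sq_add_cos_sq φ + Real.sin_sq_add_cos_sq α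

theorem cone_diagonals_concircular_general
    (α : ℝ) (θ : ℤ → ℝ)
    (lam : ℤ → ℝ)
    (f : ℤ × ℤ → E3)
    (hf : ∀ m n : ℤ, f (m, n) = lam n • (WithLp.equiv 2 (Fin 3 → ℝ)).symm
      ![Real.sin α * Real.cos (θ m), Real.sin α * Real.sin (θ m), Real.cos α]) :
    ∀ m n : ℤ, ConcyclicOrCollinear
      {f (m - 1, n - 1), f (m + 1, n - 1), f (m + 1, n + 1), f (m - 1, n + 1)} := by
  intro m n
  have hf' : ∀ m n, f (m, n) = lam n • circularConeRuling α (θ m) := hf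
  simp only [hf']
  exact concyclic_or_collinear_smul_smul
    (by rw [norm_circularConeRuling, norm_circularConeRuling]) _ _

/-- For a discrete circular cone
`f(m,n) = λₙ·(sin α cos θₘ, sin α sin θₘ, cos α)` with `α ∈ (0,π)` and `λₙ > 0`, the four
diagonal neighbours of every vertex are concircular. -/
theorem cone_diagonals_concircular
    (α : ℝ) (hα : α ∈ Set.Ioo 0 Real.pi) (θ : ℤ → ℝ)
    (lam : ℤ → ℝ) (hlam : ∀ n : ℤ, 0 < lam n)
    (f : ℤ × ℤ → E3)
    (hf : ∀ m n : ℤ, f (m, n) = lam n • (WithLp.equiv 2 (Fin 3 → ℝ)).symm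
      ![Real.sin α * Real.cos (θ m), Real.sin α * Real.sin (θ m), Real.cos α]) :
    ∀ m n : ℤ, ConcyclicOrCollinear
      {f (m - 1, n - 1), f (m + 1, n - 1), f (m + 1, n + 1), f (m - 1, n + 1)} :=
  cone_diagonals_concircular_general α θ lam f hf
end
end
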